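/- arXiv:2605.15914 — 3 statements merged into one kernel-verified Lean document; each statement's English description precedes it below -/
import Mathlib

section
/- For every integer L ≥ 1, the product P_L = ∏_{k=0}^{L−1} (3 − 2 cos(2πk/L)) equals r₊^L + r₋^L − 2, where r₊ = (3+√5)/2 and r₋ = (3−√5)/2. -/
/-!
For real `r ≠ 0` and `θ` one has `|r - e^{iθ}|² = r (r + r⁻¹ - 2 cos θ)`, and the `L`-th roots of
unity `ζ^k` satisfy `∏ₖ (r - ζ^k) = r^L - 1`. Taking squared absolute values gives
`∏ₖ (r + r⁻¹ - 2 cos (2πk/L)) = (r^L - 1)² / r^L = r^L + r^{-L} - 2`. The golden-ratio square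
`r₊ = (3 + √5)/2` has `r₊⁻¹ = r₋` and `r₊ + r₋ = 3`.
-/

open Complex Finset

lemma IsPrimitiveRoot.prod_range_sub_pow {R : Type*} [CommRing R] [IsDomain R] {ζ : R} {n : ℕ}
    (hζ : IsPrimitiveRoot ζ n) (hn : 0 < n) (x : R) :
    ∏ k ∈ range n, (x - ζ ^ k) = x ^ n - 1 := by
  simpa [Polynomial.eval_prod] using
    (congrArg (Polynomial.eval x) (X_pow_sub_C_eq_prod hζ hn (one_pow n))).symm

lemma Complex.normSq_ofReal_sub_exp_mul_I (r θ : ℝ) :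
    normSq (r - exp (θ * I)) = r ^ 2 - 2 * r * Real.cos θ + 1 := by
  rw [normSq_apply, sub_re, sub_im, exp_ofReal_mul_I_re, exp_ofReal_mul_I_im, ofReal_re,
    ofReal_im]
  nlinarith [Real.sin_sq_add_cos_sq θ]

lemma prod_add_inv_sub_two_mul_cos {r : ℝ} (hr : r ≠ 0) {L : ℕ} (hL : 0 < L) :
    ∏ k ∈ range L, (r + r⁻¹ - 2 * Real.cos (2 * Real.pi * k / L)) = r ^ L + r⁻¹ ^ L - 2 := by
  set ζ : ℂ := exp (2 * Real.pi * I / L)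
  have hζ : IsPrimitiveRoot ζ L := isPrimitiveRoot_exp L hL.ne'
  have hfactor (k : ℕ) :
      r + r⁻¹ - 2 * Real.cos (2 * Real.pi * k / L) = normSq (r - ζ ^ k) / r := by
    have hpow : ζ ^ k = exp ((2 * Real.pi * k / L : ℝ) * I) := by
      rw [← exp_nat_mul]
      congr 1
      push_cast
      ring
    rw [hpow, normSq_ofReal_sub_exp_mul_I]
    field_simp
    ring
  have hnorm : normSq ((r : ℂ) ^ L - 1) = (r ^ L - 1) ^ 2 := by
    rw [← ofReal_pow, ← ofReal_one, ← ofReal_sub, normSq_ofReal, sq]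
  rw [prod_congr rfl fun k _ ↦ hfactor k, prod_div_distrib, prod_const, card_range,
    ← map_prod normSq, hζ.prod_range_sub_pow hL, hnorm, inv_pow]
  field_simp
  ring

theorem product_formula (L : ℕ) (hL : 1 ≤ L) :
    ∏ k ∈ Finset.range L, (3 - 2 * Real.cos (2 * Real.pi * k / L)) =
      ((3 + Real.sqrt 5) / 2) ^ L + ((3 - Real.sqrt 5) / 2) ^ L - 2 := by
  have hsqrt : Real.sqrt 5 ^ 2 = 5 := Real.sq_sqrt (by norm_num)
  have hr : (3 + Real.sqrt 5) / 2 ≠ 0 := by positivity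
  have hinv : ((3 + Real.sqrt 5) / 2)⁻¹ = (3 - Real.sqrt 5) / 2 := by
    refine inv_eq_of_mul_eq_one_right ?_
    nlinarith
  have hsum : (3 + Real.sqrt 5) / 2 + (3 - Real.sqrt 5) / 2 = 3 := by ring
  simpa only [hinv, hsum] using prod_add_inv_sub_two_mul_cos hr hL
end

section
/- Let Δ_{n,L} be the block upper-bidiagonal matrix with diagonal blocks B_L and superdiagonal blocks −I_L. Then the cokernel ℤ^{nL}/Δ_{n,L}^T ℤ^{nL} is isomorphic as an abelian group to ℤ^L/B_L^n ℤ^L. -/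
/-!
With `f = Bᵀ` acting on `M = ℤ^L`, the matrix `Δᵀ` is the operator `z ↦ (f z_i - z_{i-1})_i`
on `M^n`. Modulo its range, `z` is congruent to `(∑ f^i z_i, 0, …, 0)`, and a vector placed in
the first slot becomes zero exactly when it lies in `f^n M`; so `z ↦ ∑ f^i z_i` identifies the
cokernel of `Δᵀ` with `M / f^n M`. Smith normal form then replaces `(B^n)ᵀ` by `B^n`: a
nonsingular matrix over a PID is equivalent to a diagonal one, hence has the same cokernel as its
transpose.
-/

/-- The block upper-bidiagonal matrix with diagonal blocks `B` and superdiagonal blocks `−I`. -/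
def Delta (n L : ℕ) (B : Matrix (Fin L) (Fin L) ℤ) :
    Matrix (Fin n × Fin L) (Fin n × Fin L) ℤ := fun p q =>
  if p.1 = q.1 then B p.2 q.2
  else if (q.1 : ℕ) = (p.1 : ℕ) + 1 then (if p.2 = q.2 then -1 else 0)
  else 0

open LinearMap Matrix

namespace Module.End

variable {R M : Type*} [Ring R] [AddCommGroup M] [Module R M] (f : Module.End R M) (n : ℕ)

def lowerBidiagonal : Module.End R (Fin (n + 1) → M) where
  toFun z := f ∘ z - Fin.cons 0 (Fin.init z)
  map_add' z w := by
    ext i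
    induction i using Fin.cases
    · simp
    · simp [Fin.init]; abel
  map_smul' r z := by
    ext i
    induction i using Fin.cases <;> simp [Fin.init, smul_sub]

theorem lowerBidiagonal_apply (z : Fin (n + 1) → M) :
    lowerBidiagonal f n z = f ∘ z - Fin.cons 0 (Fin.init z) :=
  rfl

@[simp]
theorem lowerBidiagonal_apply_zero (z : Fin (n + 1) → M) :
    lowerBidiagonal f n z 0 = f (z 0) := by
  simp [lowerBidiagonal]

@[simp]
theorem lowerBidiagonal_apply_succ (z : Fin (n + 1) → M) (k : Fin n) :
    lowerBidiagonal f n z k.succ = f (z k.succ) - z k.castSucc := by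
  simp [lowerBidiagonal, Fin.init]

theorem lowerBidiagonal_single_castSucc (k : Fin n) (v : M) :
    lowerBidiagonal f n (Pi.single k.castSucc v) =
      Pi.single k.castSucc (f v) - (Pi.single k.succ v : Fin (n + 1) → M) := by
  ext i
  induction i using Fin.cases with
  | zero => simp [Pi.single_apply, apply_ite f, eq_comm]
  | succ j => simp [Pi.single_apply, apply_ite f]

theorem lowerBidiagonal_single_last (v : M) :
    lowerBidiagonal f n (Pi.single (Fin.last n) v) =
      (Pi.single (Fin.last n) (f v) : Fin (n + 1) → M) := by
  ext i
  induction i using Fin.cases <;> simp [Pi.single_apply, apply_ite f]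

def sumPow : (Fin (n + 1) → M) →ₗ[R] M :=
  ∑ i : Fin (n + 1), (f ^ (i : ℕ)) ∘ₗ LinearMap.proj i

theorem sumPow_apply (z : Fin (n + 1) → M) :
    sumPow f n z = ∑ i : Fin (n + 1), (f ^ (i : ℕ)) (z i) := by
  simp [sumPow]

theorem sumPow_single_zero (v : M) : sumPow f n (Pi.single 0 v) = v := by
  rw [sumPow_apply, Fintype.sum_eq_single 0 fun i hi => by simp [hi]]
  simp

theorem sumPow_lowerBidiagonal (z : Fin (n + 1) → M) :
    sumPow f n (lowerBidiagonal f n z) = (f ^ (n + 1)) (z (Fin.last n)) := by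
  rw [lowerBidiagonal_apply, map_sub, sumPow_apply, sumPow_apply, Fin.sum_univ_castSucc,
    Fin.sum_univ_succ]
  simp [Fin.init, pow_succ]

theorem single_sub_single_zero_pow_mem_range (j : Fin (n + 1)) (v : M) :
    Pi.single j v - Pi.single 0 ((f ^ (j : ℕ)) v) ∈ range (lowerBidiagonal f n) := by
  induction j using Fin.induction generalizing v with
  | zero => simp
  | succ k ih =>
    have h := (range _).sub_mem (ih (f v))
      (mem_range_self (lowerBidiagonal f n) (Pi.single k.castSucc v))
    rw [lowerBidiagonal_single_castSucc, sub_sub_sub_cancel_left] at h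
    simpa [pow_succ] using h

theorem sub_single_zero_sumPow_mem_range (z : Fin (n + 1) → M) :
    z - Pi.single 0 (sumPow f n z) ∈ range (lowerBidiagonal f n) := by
  have hz : z - Pi.single 0 (sumPow f n z) =
      ∑ j, (Pi.single j (z j) - Pi.single 0 ((f ^ (j : ℕ)) (z j))) := by
    rw [Finset.sum_sub_distrib, Finset.univ_sum_single, sumPow_apply]
    exact congrArg _ (map_sum (AddMonoidHom.single _ 0) _ _)
  rw [hz]
  exact Submodule.sum_mem _ fun j _ => single_sub_single_zero_pow_mem_range f n j (z j)

theorem single_zero_pow_mem_range (v : M) :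
    Pi.single 0 ((f ^ (n + 1)) v) ∈ range (lowerBidiagonal f n) := by
  have h := (range _).sub_mem (mem_range_self (lowerBidiagonal f n) (Pi.single (Fin.last n) v))
    (single_sub_single_zero_pow_mem_range f n (Fin.last n) (f v))
  rw [lowerBidiagonal_single_last, sub_sub_cancel] at h
  simpa [pow_succ] using h

noncomputable def quotientRangeLowerBidiagonalEquiv :
    ((Fin (n + 1) → M) ⧸ range (lowerBidiagonal f n)) ≃ₗ[R] (M ⧸ range (f ^ (n + 1))) :=
  LinearEquiv.ofLinearMap
    (Submodule.mapQ _ _ (sumPow f n) <| by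
      rintro _ ⟨z, rfl⟩
      exact ⟨z (Fin.last n), (sumPow_lowerBidiagonal f n z).symm⟩)
    (Submodule.mapQ _ _ (LinearMap.single R (fun _ => M) 0) <| by
      rintro _ ⟨v, rfl⟩
      exact single_zero_pow_mem_range f n v)
    (Submodule.linearMap_qext _ <| LinearMap.ext fun v => by simp [sumPow_single_zero])
    (Submodule.linearMap_qext _ <| LinearMap.ext fun z => by
      simpa [Submodule.Quotient.eq, ← neg_mem_iff (x := z - _), neg_sub]
        using sub_single_zero_sumPow_mem_range f n z)

end Module.End

namespace Matrix

variable {ι R : Type*} [Fintype ι] [DecidableEq ι] [CommRing R]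

theorem range_toLin'_mul_mul (U : Matrix ι ι R) {V : Matrix ι ι R} (hV : IsUnit V)
    (M : Matrix ι ι R) :
    range (toLin' (U * M * V)) = (range (toLin' M)).map (toLin' U) := by
  let := hV.invertible
  rw [toLin'_mul, toLin'_mul, LinearMap.range_comp_of_range_eq_top, LinearMap.range_comp]
  exact range_eq_top.mpr (toLinearEquiv' V inferInstance).surjective

noncomputable def quotientRangeToLin'MulMulEquiv {U V : Matrix ι ι R} (hU : IsUnit U)
    (hV : IsUnit V) (M : Matrix ι ι R) :
    ((ι → R) ⧸ range (toLin' M)) ≃ₗ[R] ((ι → R) ⧸ range (toLin' (U * M * V))) :=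
  Submodule.Quotient.equiv _ _ (toLinearEquiv' U hU.invertible)
    (range_toLin'_mul_mul U hV M).symm

variable [IsDomain R] [IsPrincipalIdealRing R]

theorem exists_eq_mul_diagonal_mul {A : Matrix ι ι R} (hA : A.det ≠ 0) :
    ∃ (P Q : Matrix ι ι R) (a : ι → R), IsUnit P ∧ IsUnit Q ∧ A = P * diagonal a * Q := by
  let e := LinearEquiv.ofInjective (toLin' A) (mulVec_injective_of_det_ne_zero hA)
  obtain ⟨b', a, c, hc⟩ := (range (toLin' A)).exists_smith_normal_form_of_rank_eq
    (Pi.basisFun R ι) e.finrank_eq.symm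
  let d := c.map e.symm
  have hd : LinearMap.toMatrix d b' (toLin' A) = diagonal a := by
    ext i j
    have : toLin' A (d j) = a j • b' j := by
      rw [← hc]; exact congrArg Subtype.val (e.apply_symm_apply (c j))
    rw [LinearMap.toMatrix_apply, this, map_smul, b'.repr_self]
    simp only [diagonal_apply, Finsupp.smul_apply, Finsupp.single_apply, smul_eq_mul, eq_comm]
    split_ifs with h <;> simp [h]
  refine ⟨(Pi.basisFun R ι).toMatrix b', d.toMatrix (Pi.basisFun R ι), a,
    @isUnit_of_invertible _ _ _ ((Pi.basisFun R ι).invertibleToMatrix b'),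
    @isUnit_of_invertible _ _ _ (d.invertibleToMatrix _), ?_⟩
  rw [← hd, basis_toMatrix_mul_linearMap_toMatrix_mul_basis_toMatrix,
    LinearMap.toMatrix_eq_toMatrix', toMatrix'_toLin']

theorem nonempty_quotientRange_toLin'_transpose_equiv {A : Matrix ι ι R} (hA : A.det ≠ 0) :
    Nonempty (((ι → R) ⧸ range (toLin' Aᵀ)) ≃ₗ[R] ((ι → R) ⧸ range (toLin' A))) := by
  obtain ⟨P, Q, a, hP, hQ, rfl⟩ := exists_eq_mul_diagonal_mul hA
  have hT : (P * diagonal a * Q)ᵀ = Qᵀ * diagonal a * Pᵀ := by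
    simp only [transpose_mul, diagonal_transpose, Matrix.mul_assoc]
  rw [hT]
  have hQT := (isUnit_transpose Q).mpr hQ
  have hPT := (isUnit_transpose P).mpr hP
  exact ⟨(quotientRangeToLin'MulMulEquiv hQT hPT _).symm.trans
    (quotientRangeToLin'MulMulEquiv hP hQ _)⟩

end Matrix

theorem Delta_apply {n L : ℕ} (B : Matrix (Fin L) (Fin L) ℤ) (j i : Fin n) (d c : Fin L) :
    Delta n L B (j, d) (i, c) =
      (if j = i then B d c else 0) - (if (i : ℕ) = j + 1 then (1 : Matrix _ _ ℤ) d c else 0) := by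
  unfold Delta
  split_ifs <;> simp_all [one_apply]

theorem Delta_transpose_mulVec_apply {n L : ℕ} (B : Matrix (Fin L) (Fin L) ℤ)
    (z : Fin (n + 1) × Fin L → ℤ) (i : Fin (n + 1)) (c : Fin L) :
    ((Delta (n + 1) L B)ᵀ *ᵥ z) (i, c) =
      Module.End.lowerBidiagonal (toLin' Bᵀ) n (Function.curry z) i c := by
  simp only [mulVec, dotProduct, Fintype.sum_prod_type, transpose_apply, Delta_apply, sub_mul,
    Finset.sum_sub_distrib, ite_mul, zero_mul, Finset.sum_ite_irrel, Finset.sum_const_zero,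
    Fintype.sum_ite_eq', one_apply, one_mul]
  induction i using Fin.cases with
  | zero =>
    simp [toLin'_apply, mulVec, dotProduct]
  | succ k =>
    have hk (x : Fin (n + 1)) : (k : ℕ) = x ↔ k.castSucc = x := by simp [Fin.ext_iff]
    simp [toLin'_apply, mulVec, dotProduct, hk]

theorem curry_comp_toLin'_Delta_transpose {n L : ℕ} (B : Matrix (Fin L) (Fin L) ℤ) :
    (LinearEquiv.curry ℤ ℤ (Fin (n + 1)) (Fin L)).toLinearMap ∘ₗ toLin' (Delta (n + 1) L B)ᵀ =
      Module.End.lowerBidiagonal (toLin' Bᵀ) n ∘ₗ LinearEquiv.curry ℤ ℤ (Fin (n + 1)) (Fin L) :=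
  LinearMap.ext fun z => funext₂ fun i c => Delta_transpose_mulVec_apply B z i c

theorem cokernel_Delta (n L : ℕ) (hn : 1 ≤ n) (B : Matrix (Fin L) (Fin L) ℤ)
    (hB : B.det ≠ 0) :
    Nonempty
      (((Fin n × Fin L → ℤ) ⧸ LinearMap.range (Matrix.toLin' (Delta n L B).transpose)) ≃+
        ((Fin L → ℤ) ⧸ LinearMap.range (Matrix.toLin' (B ^ n)))) := by
  obtain ⟨m, rfl⟩ := Nat.exists_eq_add_of_le' hn
  let e := LinearEquiv.curry ℤ ℤ (Fin (m + 1)) (Fin L)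
  have hDelta : (range (toLin' (Delta (m + 1) L B)ᵀ)).map e.toLinearMap =
      range (Module.End.lowerBidiagonal (toLin' Bᵀ) m) := by
    rw [← range_comp, curry_comp_toLin'_Delta_transpose,
      range_comp_of_range_eq_top _ e.range]
  have hpow : range (toLin' Bᵀ ^ (m + 1)) = range (toLin' (B ^ (m + 1))ᵀ) := by
    rw [transpose_pow, toLin'_pow]
  obtain ⟨eT⟩ := nonempty_quotientRange_toLin'_transpose_equiv (A := B ^ (m + 1))
    (by rw [det_pow]; exact pow_ne_zero _ hB)
  exact ⟨(Submodule.Quotient.equiv _ _ e hDelta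
    |>.trans (Module.End.quotientRangeLowerBidiagonalEquiv _ m)
    |>.trans (Submodule.quotEquivOfEq _ _ hpow) |>.trans eT).toAddEquiv⟩
end

section
/- Let B = [[2,−1],[−1,2]]. Then for every n ≥ 1, the abelian group ℤ²/Bⁿℤ² is cyclic of order 3ⁿ, i.e. ℤ²/Bⁿℤ² ≅ ℤ/3ⁿℤ. -/
lemma pow_form (n : ℕ) : ∃ a b : ℤ,
    (!![2, -1; -1, 2] : Matrix (Fin 2) (Fin 2) ℤ) ^ n = !![a, b; b, a] ∧
    a + b = 1 ∧ a - b = 3 ^ n := by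
  induction n with
  | zero => exact ⟨1, 0, by rw [pow_zero]; exact Matrix.one_fin_two, by ring, by norm_num⟩
  | succ n ih =>
    obtain ⟨a, b, hM, h1, h2⟩ := ih
    refine ⟨2*a - b, 2*b - a, ?_, by omega, ?_⟩
    · rw [pow_succ, hM, Matrix.mul_fin_two]
      congr 1 <;> ring
    · rw [pow_succ]; omega

theorem ladder_cokernel (n : ℕ) (hn : 1 ≤ n) :
    Nonempty
      (((Fin 2 → ℤ) ⧸ LinearMap.range (Matrix.toLin' ((!![2, -1; -1, 2] : Matrix (Fin 2) (Fin 2) ℤ) ^ n))) ≃+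
        ZMod (3 ^ n)) := by
  obtain ⟨a, b, hM, h1, h2⟩ := pow_form n
  set φ : (Fin 2 → ℤ) →ₗ[ℤ] ZMod (3 ^ n) :=
    { toFun := fun v => ((v 0 - v 1 : ℤ) : ZMod (3 ^ n))
      map_add' := by intro x y; simp only [Pi.add_apply]; push_cast; ring
      map_smul' := by intro c x; simp [smul_eq_mul]; push_cast; ring } with hφ
  have hsurj : Function.Surjective φ := by
    intro z
    obtain ⟨x, hx⟩ := ZMod.intCast_surjective (n := 3 ^ n) z
    exact ⟨![x, 0], by simp [hφ, hx]⟩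
  have hcast : ((3 ^ n : ℤ) : ZMod (3 ^ n)) = 0 := by
    rw [ZMod.intCast_zmod_eq_zero_iff_dvd]; norm_num
  have hker : LinearMap.range (Matrix.toLin'
      ((!![2, -1; -1, 2] : Matrix (Fin 2) (Fin 2) ℤ) ^ n)) = LinearMap.ker φ := by
    ext v
    constructor
    · rintro ⟨w, rfl⟩
      simp only [LinearMap.mem_ker, hφ, LinearMap.coe_mk, AddHom.coe_mk,
        Matrix.toLin'_apply, hM]
      have e0 : (!![a, b; b, a]).mulVec w 0 = a * w 0 + b * w 1 := by
        simp [Matrix.mulVec, dotProduct, Fin.sum_univ_two]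
      have e1 : (!![a, b; b, a]).mulVec w 1 = b * w 0 + a * w 1 := by
        simp [Matrix.mulVec, dotProduct, Fin.sum_univ_two]
      rw [e0, e1]
      have : a * w 0 + b * w 1 - (b * w 0 + a * w 1) = 3 ^ n * (w 0 - w 1) := by
        linear_combination (w 0 - w 1) * h2
      rw [this]
      push_cast
      push_cast at hcast
      rw [hcast, zero_mul]
    · intro hv
      simp only [LinearMap.mem_ker, hφ, LinearMap.coe_mk, AddHom.coe_mk] at hv
      rw [ZMod.intCast_zmod_eq_zero_iff_dvd] at hv
      push_cast at hv
      obtain ⟨k, hk⟩ := hv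
      have hodd : Odd ((3:ℤ) ^ n) := Odd.pow (by decide)
      obtain ⟨m, hm⟩ := hodd
      have hpar : v 0 - v 1 - k = 2 * (m * k) := by
        rw [hk, hm]; ring
      obtain ⟨u, hu⟩ : ∃ u : ℤ, 2 * u = v 0 + v 1 + k := ⟨(v 0 + v 1 + k)/2, by omega⟩
      obtain ⟨w, hw⟩ : ∃ w : ℤ, 2 * w = v 0 + v 1 - k := ⟨(v 0 + v 1 - k)/2, by omega⟩
      refine ⟨![u, w], ?_⟩
      rw [Matrix.toLin'_apply, hM]
      funext i
      fin_cases i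
      · show (!![a, b; b, a]).mulVec ![u, w] 0 = v 0
        simp only [Matrix.mulVec, dotProduct, Fin.sum_univ_two]
        simp [Matrix.cons_val_zero, Matrix.cons_val_one]
        have h2g : 2 * (a * u + b * w) = 2 * v 0 := by
          linear_combination a * hu + b * hw + (v 0 + v 1) * h1 + k * h2 - hk
        linarith
      · show (!![a, b; b, a]).mulVec ![u, w] 1 = v 1
        simp only [Matrix.mulVec, dotProduct, Fin.sum_univ_two]
        simp [Matrix.cons_val_zero, Matrix.cons_val_one]
        have h2g : 2 * (b * u + a * w) = 2 * v 1 := by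
          linear_combination b * hu + a * hw + (v 0 + v 1) * h1 - k * h2 + hk
        linarith
  exact ⟨((Submodule.quotEquivOfEq _ _ hker).trans
    (φ.quotKerEquivOfSurjective hsurj)).toAddEquiv⟩
end
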